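/- arXiv:1610.07693 — 2 statements merged into one kernel-verified Lean document; each statement's English description precedes it below -/
import Mathlib

section
/- Fix positive integers K and n, and fix vectors g_1, …, g_K ∈ ℝ^n (representing the stacked real/imaginary parts of H x_k for K distinct symbol vectors) such that every component g_{k,l} is nonzero and the vectors sign(g_1), …, sign(g_K) are pairwise distinct. Let z ∈ ℝ^n be a random vector with i.i.d. N(0, s²) components. Define g_min = min_{k,l} |g_{k,l}|, d_min = min_{i ≠ j} ‖sign(g_i) − sign(g_j)‖_0, D = ⌊(d_min + 1)/2⌋, and C = Σ_{j=D}^{n} binom(n, j). Then the average probability that the minimum-Hamming-distance detector can fail, namely (1/K) Σ_{k=1}^{K} P( ∃ j ≠ k such that ‖sign(g_k + z) − sign(g_j)‖_0 ≤ ‖sign(g_k + z) − sign(g_k)‖_0 ), is at most (C / 2^D) · exp(−D g_min² / (2 s²)). -/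
open MeasureTheory ProbabilityTheory

/-- One-bit quantizer: `sgn x = +1` if `x ≥ 0`, and `−1` otherwise. -/
noncomputable def sgn (x : ℝ) : ℝ := if 0 ≤ x then 1 else -1

open Real in
lemma gauss_ptw (v : NNReal) (hv : v ≠ 0) (t : ℝ) (ht : 0 ≤ t) :
    ∀ y ∈ Set.Ici (0:ℝ), gaussianPDFReal 0 v (y + t)
      ≤ Real.exp (-t^2/(2*v)) * gaussianPDFReal 0 v y := by
  intro y hy
  simp only [gaussianPDFReal, sub_zero]
  rw [show Real.exp (-t^2/(2*↑v)) * ((Real.sqrt (2*π*↑v))⁻¹ * Real.exp (-y^2/(2*↑v)))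
      = (Real.sqrt (2*π*↑v))⁻¹ * Real.exp (-t^2/(2*↑v) + -y^2/(2*↑v)) by
    rw [Real.exp_add]; ring]
  apply mul_le_mul_of_nonneg_left _ (by positivity)
  rw [Real.exp_le_exp]
  have hv' : (0:ℝ) < v := by positivity
  have hyt : 0 ≤ y * t := mul_nonneg hy ht
  rw [← add_div, div_le_div_iff_of_pos_right (by linarith)]
  nlinarith

lemma gauss_half (v : NNReal) (hv : v ≠ 0) :
    gaussianReal 0 v (Set.Ici 0) = 1/2 := by
  have hmap : Measure.map (fun x : ℝ => (-1 : ℝ) * x) (gaussianReal 0 v) = gaussianReal 0 v := by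
    rw [gaussianReal_map_const_mul]; norm_num
  have h1 : gaussianReal 0 v (Set.Iic 0) = gaussianReal 0 v (Set.Ici 0) := by
    conv_lhs => rw [← hmap]
    rw [Measure.map_apply (by fun_prop) measurableSet_Iic]
    congr 1; ext x; simp
  have h0 : gaussianReal 0 v {(0:ℝ)} = 0 :=
    gaussianReal_absolutelyContinuous 0 hv (by simp)
  have hIoi : gaussianReal 0 v (Set.Ioi 0) = gaussianReal 0 v (Set.Ici 0) := by
    have : Set.Ici (0:ℝ) = {0} ∪ Set.Ioi 0 := by
      ext x; simp [le_iff_lt_or_eq, or_comm, eq_comm]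
    rw [this, measure_union (by simp) measurableSet_Ioi, h0, zero_add]
  have htot : gaussianReal 0 v (Set.Iic 0) + gaussianReal 0 v (Set.Ioi 0) = 1 := by
    rw [← measure_union (by simp [Set.disjoint_left]) measurableSet_Ioi]; simp
  rw [h1, hIoi] at htot
  rw [ENNReal.eq_div_iff (by norm_num) (by norm_num), two_mul]
  exact htot

lemma gauss_int_half (v : NNReal) (hv : v ≠ 0) :
    ∫ x in Set.Ici (0:ℝ), gaussianPDFReal 0 v x = 1/2 := by
  have h := gauss_half v hv
  rw [gaussianReal_apply_eq_integral 0 hv] at h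
  have hnn : 0 ≤ ∫ x in Set.Ici (0:ℝ), gaussianPDFReal 0 v x :=
    setIntegral_nonneg measurableSet_Ici (fun x _ => gaussianPDFReal_nonneg _ _ _)
  have : (1/2 : ENNReal) = ENNReal.ofReal (1/2) := by
    rw [ENNReal.ofReal_div_of_pos] <;> norm_num
  rw [this, ENNReal.ofReal_eq_ofReal_iff hnn (by norm_num)] at h
  exact h

lemma gauss_tail (v : NNReal) (hv : v ≠ 0) (t : ℝ) (ht : 0 ≤ t) :
    gaussianReal 0 v (Set.Ici t) ≤ ENNReal.ofReal (Real.exp (-t^2/(2*v)) / 2) := by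
  rw [gaussianReal_apply_eq_integral 0 hv]
  apply ENNReal.ofReal_le_ofReal
  have hInt : ∫ x in Set.Ici t, gaussianPDFReal 0 v x
      = ∫ y in Set.Ici 0, gaussianPDFReal 0 v (y + t) := by
    have hmp : MeasurePreserving (fun y : ℝ => y + t) volume volume :=
      measurePreserving_add_right volume t
    have hemb : MeasurableEmbedding (fun y : ℝ => y + t) :=
      (Homeomorph.addRight t).measurableEmbedding
    have h2 := hmp.setIntegral_preimage_emb hemb (gaussianPDFReal 0 v) (Set.Ici t)
    rw [← h2]; congr 1; ext y; simp
  rw [hInt]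
  have hmono : ∫ y in Set.Ici 0, gaussianPDFReal 0 v (y + t)
      ≤ ∫ y in Set.Ici 0, Real.exp (-t^2/(2*v)) * gaussianPDFReal 0 v y := by
    apply setIntegral_mono_on
    · exact ((integrable_gaussianPDFReal 0 v).comp_add_right t).restrict
    · exact ((integrable_gaussianPDFReal 0 v).const_mul _).restrict
    · exact measurableSet_Ici
    · exact gauss_ptw v hv t ht
  apply hmono.trans
  rw [integral_const_mul, gauss_int_half v hv]
  ring_nf
  exact le_refl _

lemma gauss_Iio_neg (v : NNReal) (hv : v ≠ 0) (t : ℝ) :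
    gaussianReal 0 v (Set.Iio (-t)) ≤ gaussianReal 0 v (Set.Ici t) := by
  have hmap : Measure.map (fun x : ℝ => (-1 : ℝ) * x) (gaussianReal 0 v) = gaussianReal 0 v := by
    rw [gaussianReal_map_const_mul]; norm_num
  have h1 : gaussianReal 0 v (Set.Iio (-t)) = gaussianReal 0 v (Set.Ioi t) := by
    conv_lhs => rw [← hmap]
    rw [Measure.map_apply (by fun_prop) measurableSet_Iio]
    congr 1; ext x
    simp only [Set.mem_preimage, Set.mem_Iio, Set.mem_Ioi]
    constructor <;> intro h <;> linarith
  rw [h1]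
  exact measure_mono Set.Ioi_subset_Ici_self

lemma flip_prob (v : NNReal) (hv : v ≠ 0) (a gmin : ℝ) (ha : a ≠ 0)
    (hg0 : 0 ≤ gmin) (hga : gmin ≤ |a|) :
    gaussianReal 0 v {x : ℝ | sgn (a + x) ≠ sgn a}
      ≤ ENNReal.ofReal (Real.exp (-gmin^2/(2*v)) / 2) := by
  rcases lt_or_gt_of_ne ha with hneg | hpos
  · -- a < 0 : flip ⇔ 0 ≤ a + x ⇔ x ≥ -a, and gmin ≤ -a
    have hset : {x : ℝ | sgn (a + x) ≠ sgn a} ⊆ Set.Ici gmin := by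
      intro x hx
      simp only [Set.mem_setOf_eq, sgn, if_neg (not_le.mpr hneg)] at hx
      by_cases h : 0 ≤ a + x
      · rw [if_pos h] at hx
        have : -a ≤ x := by linarith
        have : gmin ≤ x := le_trans (hga.trans_eq (abs_of_neg hneg)) this
        exact this
      · rw [if_neg h] at hx; exact absurd rfl hx
    exact (measure_mono hset).trans (gauss_tail v hv gmin hg0)
  · -- a > 0 : flip ⇔ a + x < 0 ⇔ x < -a ≤ -gmin
    have hset : {x : ℝ | sgn (a + x) ≠ sgn a} ⊆ Set.Iio (-gmin) := by
      intro x hx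
      simp only [Set.mem_setOf_eq, sgn, if_pos hpos.le] at hx
      by_cases h : 0 ≤ a + x
      · rw [if_pos h] at hx; exact absurd rfl hx
      · rw [if_neg h] at hx
        push_neg at h
        have : gmin ≤ a := hga.trans_eq (abs_of_pos hpos)
        simp only [Set.mem_Iio]; linarith
    exact (measure_mono hset).trans ((gauss_Iio_neg v hv gmin).trans (gauss_tail v hv gmin hg0))


/-- Theorem 1 (real-domain form): for `K` vectors `g_k ∈ ℝⁿ` with nonzero components
and pairwise distinct sign patterns, noise `z` with i.i.d. `N(0, s²)` components,
`g_min = min_{k,l} |g_{k,l}|`, `d_min = min_{i≠j} ‖sign(g_i) − sign(g_j)‖₀`,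
`D = ⌊(d_min+1)/2⌋` and `C = Σ_{j=D}^n C(n,j)` the average probability that the
minimum-Hamming-distance detector can fail is at most `(C/2^D) exp(−D g_min²/(2s²))`. -/
theorem svep_upper_bound (K n : ℕ) (hK : 0 < K) (hn : 0 < n)
    (g : Fin K → Fin n → ℝ) (hnz : ∀ k l, g k l ≠ 0)
    (hdistinct : ∀ i j : Fin K, i ≠ j →
      (fun l => sgn (g i l)) ≠ (fun l => sgn (g j l)))
    (s : ℝ) (hs : 0 < s)
    (gmin : ℝ) (hgmin : IsLeast {r : ℝ | ∃ k l, r = |g k l|} gmin)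
    (dmin : ℕ)
    (hdmin : IsLeast {d : ℕ | ∃ i j : Fin K, i ≠ j ∧
      d = hammingDist (fun l => sgn (g i l)) (fun l => sgn (g j l))} dmin) :
    (K : ENNReal)⁻¹ * ∑ k : Fin K,
        (Measure.pi fun _ : Fin n => gaussianReal 0 (s ^ 2).toNNReal)
          {z : Fin n → ℝ | ∃ j : Fin K, j ≠ k ∧
            hammingDist (fun l => sgn (g k l + z l)) (fun l => sgn (g j l)) ≤
              hammingDist (fun l => sgn (g k l + z l)) (fun l => sgn (g k l))} ≤
      ENNReal.ofReal
        (((∑ j ∈ Finset.Icc ((dmin + 1) / 2) n, (n.choose j : ℝ)) /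
            2 ^ ((dmin + 1) / 2)) *
          Real.exp (-(((dmin + 1) / 2 : ℕ) : ℝ) * gmin ^ 2 / (2 * s ^ 2))) := by
  set v : NNReal := (s ^ 2).toNNReal with hv_def
  have hv : v ≠ 0 := by
    simp [hv_def, Real.toNNReal_eq_zero, not_le]
    positivity
  have hvr : (v : ℝ) = s ^ 2 := Real.coe_toNNReal _ (by positivity)
  set D : ℕ := (dmin + 1) / 2 with hD_def
  set μ1 : Measure ℝ := gaussianReal 0 v with hμ1_def
  set μ : Measure (Fin n → ℝ) := Measure.pi fun _ : Fin n => μ1 with hμ_def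
  -- gmin facts
  have hgmin_pos : 0 < gmin := by
    obtain ⟨k, l, hkl⟩ := hgmin.1
    rw [hkl]
    exact abs_pos.mpr (hnz k l)
  have hgmin_le : ∀ k l, gmin ≤ |g k l| := fun k l => hgmin.2 ⟨k, l, rfl⟩
  -- dmin facts
  have hdmin_pos : 0 < dmin := by
    obtain ⟨i, j, hij, hd⟩ := hdmin.1
    rw [hd]
    exact hammingDist_pos.mpr (hdistinct i j hij)
  have hdmin_le : dmin ≤ n := by
    obtain ⟨i, j, hij, hd⟩ := hdmin.1
    rw [hd]
    have h := hammingDist_le_card_fintype (x := fun l => sgn (g i l))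
      (y := fun l => sgn (g j l))
    simpa using h
  have hDn : D ≤ n := by omega
  -- real-valued flip probability bound
  set p : ℝ := Real.exp (-gmin ^ 2 / (2 * s ^ 2)) / 2 with hp_def
  have hp_nonneg : 0 ≤ p := by positivity
  have hflip : ∀ k l, μ1 {x : ℝ | sgn (g k l + x) ≠ sgn (g k l)} ≤ ENNReal.ofReal p := by
    intro k l
    have := flip_prob v hv (g k l) gmin (hnz k l) hgmin_pos.le (hgmin_le k l)
    rwa [hvr] at this
  -- the per-user bound
  have hkey : ∀ k : Fin K,
      μ {z : Fin n → ℝ | ∃ j : Fin K, j ≠ k ∧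
          hammingDist (fun l => sgn (g k l + z l)) (fun l => sgn (g j l)) ≤
            hammingDist (fun l => sgn (g k l + z l)) (fun l => sgn (g k l))}
        ≤ (n.choose D : ENNReal) * (ENNReal.ofReal p) ^ D := by
    intro k
    -- Step A+B: event ⊆ union of size-D flip cylinders
    have hsub : {z : Fin n → ℝ | ∃ j : Fin K, j ≠ k ∧
          hammingDist (fun l => sgn (g k l + z l)) (fun l => sgn (g j l)) ≤
            hammingDist (fun l => sgn (g k l + z l)) (fun l => sgn (g k l))}
        ⊆ ⋃ S ∈ Finset.powersetCard D (Finset.univ : Finset (Fin n)),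
            Set.pi ↑S (fun l => {x : ℝ | sgn (g k l + x) ≠ sgn (g k l)}) := by
      intro z hz
      obtain ⟨j, hjk, hle⟩ := hz
      set q : Fin n → ℝ := fun l => sgn (g k l + z l) with hq
      have h1 : dmin ≤ hammingDist (fun l => sgn (g k l)) (fun l => sgn (g j l)) :=
        hdmin.2 ⟨k, j, hjk.symm, rfl⟩
      have h2 : hammingDist (fun l => sgn (g k l)) (fun l => sgn (g j l))
          ≤ hammingDist q (fun l => sgn (g k l)) + hammingDist q (fun l => sgn (g j l)) :=
        hammingDist_triangle_left _ _ _
      have h3 : D ≤ hammingDist q (fun l => sgn (g k l)) := by omega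
      rw [hammingDist] at h3
      obtain ⟨T, hTsub, hTcard⟩ := Finset.exists_subset_card_eq h3
      simp only [Set.mem_iUnion]
      refine ⟨T, ?_, ?_⟩
      · simp [Finset.mem_powersetCard, hTcard]
      · intro l hl
        have := hTsub (by simpa using hl)
        simp only [Finset.mem_filter] at this
        exact this.2
    refine (measure_mono hsub).trans ?_
    refine (measure_biUnion_finset_le _ _).trans ?_
    have hcyl : ∀ S ∈ Finset.powersetCard D (Finset.univ : Finset (Fin n)),
        μ (Set.pi ↑S (fun l => {x : ℝ | sgn (g k l + x) ≠ sgn (g k l)}))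
          ≤ (ENNReal.ofReal p) ^ D := by
      intro S hS
      have hScard : S.card = D := (Finset.mem_powersetCard.mp hS).2
      have heq : Set.pi (↑S : Set (Fin n)) (fun l => {x : ℝ | sgn (g k l + x) ≠ sgn (g k l)})
          = Set.pi Set.univ (fun l =>
              if l ∈ S then {x : ℝ | sgn (g k l + x) ≠ sgn (g k l)} else Set.univ) := by
        ext z
        simp only [Set.mem_pi, Set.mem_univ, true_implies, Finset.coe_sort_coe,
          Finset.mem_coe]
        constructor
        · intro h l
          split_ifs with hl
          · exact h l hl
          · trivial
        · intro h l hl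
          have := h l
          rwa [if_pos hl] at this
      rw [heq, hμ_def, Measure.pi_pi]
      have : ∀ l : Fin n, μ1 (if l ∈ S then {x : ℝ | sgn (g k l + x) ≠ sgn (g k l)}
          else Set.univ) = if l ∈ S then μ1 {x : ℝ | sgn (g k l + x) ≠ sgn (g k l)} else 1 := by
        intro l; split_ifs <;> simp [hμ1_def]
      simp_rw [this]
      calc ∏ l : Fin n, (if l ∈ S then μ1 {x : ℝ | sgn (g k l + x) ≠ sgn (g k l)} else 1)
          = ∏ l ∈ S, μ1 {x : ℝ | sgn (g k l + x) ≠ sgn (g k l)} := by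
            rw [Finset.prod_ite_mem, Finset.univ_inter]
        _ ≤ ∏ l ∈ S, ENNReal.ofReal p := Finset.prod_le_prod' (fun l _ => hflip k l)
        _ = (ENNReal.ofReal p) ^ D := by rw [Finset.prod_const, hScard]
    calc ∑ S ∈ Finset.powersetCard D (Finset.univ : Finset (Fin n)),
          μ (Set.pi ↑S (fun l => {x : ℝ | sgn (g k l + x) ≠ sgn (g k l)}))
        ≤ ∑ S ∈ Finset.powersetCard D (Finset.univ : Finset (Fin n)),
            (ENNReal.ofReal p) ^ D := Finset.sum_le_sum hcyl
      _ = (n.choose D : ENNReal) * (ENNReal.ofReal p) ^ D := by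
          rw [Finset.sum_const, Finset.card_powersetCard, Finset.card_univ, Fintype.card_fin,
            nsmul_eq_mul]
    -- end hkey
  -- bound the single-user bound by the target real expression
  have hbound : (n.choose D : ENNReal) * (ENNReal.ofReal p) ^ D ≤
      ENNReal.ofReal
        (((∑ j ∈ Finset.Icc D n, (n.choose j : ℝ)) / 2 ^ D) *
          Real.exp (-(D : ℝ) * gmin ^ 2 / (2 * s ^ 2))) := by
    rw [← ENNReal.ofReal_pow hp_nonneg, ← ENNReal.ofReal_natCast (n.choose D),
      ← ENNReal.ofReal_mul (by positivity)]
    apply ENNReal.ofReal_le_ofReal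
    have hpD : p ^ D = Real.exp (-(D : ℝ) * gmin ^ 2 / (2 * s ^ 2)) / 2 ^ D := by
      rw [hp_def, div_pow, ← Real.exp_nat_mul]
      congr 1
      ring
    rw [hpD]
    rw [div_mul_eq_mul_div, mul_div_assoc, mul_div_assoc]
    apply mul_le_mul_of_nonneg_right _ (by positivity)
    have : (n.choose D : ℝ) ≤ ∑ j ∈ Finset.Icc D n, (n.choose j : ℝ) := by
      apply Finset.single_le_sum (f := fun j => (n.choose j : ℝ))
        (fun j _ => by positivity)
      simp [Finset.mem_Icc, hDn]
    linarith [this]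
  -- conclude
  have hsum : ∑ k : Fin K, μ {z : Fin n → ℝ | ∃ j : Fin K, j ≠ k ∧
          hammingDist (fun l => sgn (g k l + z l)) (fun l => sgn (g j l)) ≤
            hammingDist (fun l => sgn (g k l + z l)) (fun l => sgn (g k l))}
      ≤ (K : ENNReal) * ENNReal.ofReal
        (((∑ j ∈ Finset.Icc D n, (n.choose j : ℝ)) / 2 ^ D) *
          Real.exp (-(D : ℝ) * gmin ^ 2 / (2 * s ^ 2))) := by
    calc _ ≤ ∑ _k : Fin K, ENNReal.ofReal
          (((∑ j ∈ Finset.Icc D n, (n.choose j : ℝ)) / 2 ^ D) *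
            Real.exp (-(D : ℝ) * gmin ^ 2 / (2 * s ^ 2))) :=
        Finset.sum_le_sum (fun k _ => (hkey k).trans hbound)
      _ = _ := by rw [Finset.sum_const, Finset.card_univ, Fintype.card_fin, nsmul_eq_mul]
  calc (K : ENNReal)⁻¹ * ∑ k : Fin K, μ {z : Fin n → ℝ | ∃ j : Fin K, j ≠ k ∧
          hammingDist (fun l => sgn (g k l + z l)) (fun l => sgn (g j l)) ≤
            hammingDist (fun l => sgn (g k l + z l)) (fun l => sgn (g k l))}
      ≤ (K : ENNReal)⁻¹ * ((K : ENNReal) * ENNReal.ofReal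
        (((∑ j ∈ Finset.Icc D n, (n.choose j : ℝ)) / 2 ^ D) *
          Real.exp (-(D : ℝ) * gmin ^ 2 / (2 * s ^ 2)))) :=
        mul_le_mul_right hsum _
    _ = ENNReal.ofReal
        (((∑ j ∈ Finset.Icc D n, (n.choose j : ℝ)) / 2 ^ D) *
          Real.exp (-(D : ℝ) * gmin ^ 2 / (2 * s ^ 2))) := by
        rw [← mul_assoc, ENNReal.inv_mul_cancel (by exact_mod_cast hK.ne')
          (ENNReal.natCast_ne_top K), one_mul]
end

section
/- Let g ∈ ℝ^n have all components nonzero, let z ∈ ℝ^n have i.i.d. N(0, s²) components, let g_min = min_l |g_l|, and let D be an integer with 1 ≤ D ≤ n. Then P( ‖sign(g + z) − sign(g)‖_0 ≥ D ) ≤ ( Σ_{j=D}^{n} binom(n, j) ) · 2^{−D} · exp(−D g_min² / (2 s²)). -/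
open MeasureTheory ProbabilityTheory
open scoped NNReal ENNReal Real

private lemma gauss_half_aux (v : ℝ≥0) (hv : v ≠ 0) :
    gaussianReal 0 v (Set.Ici (0:ℝ)) = 2⁻¹ := by
  have h0 : gaussianReal 0 v {(0:ℝ)} = 0 :=
    gaussianReal_absolutelyContinuous 0 hv Real.volume_singleton
  have hmap : (gaussianReal (0:ℝ) v).map ((-1 : ℝ) * ·) = gaussianReal 0 v := by
    rw [gaussianReal_map_const_mul]
    norm_num
  have hsym : gaussianReal 0 v (Set.Ici (0:ℝ)) = gaussianReal 0 v (Set.Iic (0:ℝ)) := by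
    conv_lhs => rw [← hmap]
    rw [Measure.map_apply (by fun_prop) measurableSet_Ici]
    congr 1
    ext x
    simp
  have hIic : gaussianReal 0 v (Set.Iic (0:ℝ)) = gaussianReal 0 v (Set.Iio (0:ℝ)) := by
    rw [← Set.Iio_union_right]
    refine le_antisymm ((measure_union_le _ _).trans ?_) (measure_mono Set.subset_union_left)
    simp [h0]
  have huniv : gaussianReal 0 v (Set.Iio (0:ℝ)) + gaussianReal 0 v (Set.Ici (0:ℝ)) = 1 := by
    rw [← measure_union (by simp [Set.disjoint_left]) measurableSet_Ici, Set.Iio_union_Ici]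
    exact measure_univ
  have h2 : 2 * gaussianReal 0 v (Set.Ici (0:ℝ)) = 1 := by
    rw [two_mul]
    nth_rewrite 1 [hsym, hIic]
    exact huniv
  rw [(ENNReal.eq_div_iff two_ne_zero ENNReal.ofNat_ne_top).mpr h2, one_div]

private lemma gauss_half_shift (v : ℝ≥0) (hv : v ≠ 0) (t : ℝ) :
    gaussianReal t v (Set.Ici t) = 2⁻¹ := by
  have hmap : (gaussianReal (0:ℝ) v).map (· + t) = gaussianReal t v := by
    rw [gaussianReal_map_add_const]; ring_nf
  rw [← hmap, Measure.map_apply (by fun_prop) measurableSet_Ici]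
  have : (· + t) ⁻¹' Set.Ici t = Set.Ici (0:ℝ) := by ext x; simp
  rw [this, gauss_half_aux v hv]

private lemma gauss_neg_sym (v : ℝ≥0) (hv : v ≠ 0) (t : ℝ) :
    gaussianReal 0 v (Set.Iic (-t)) = gaussianReal 0 v (Set.Ici t) := by
  have hmap : (gaussianReal (0:ℝ) v).map ((-1 : ℝ) * ·) = gaussianReal 0 v := by
    rw [gaussianReal_map_const_mul]
    norm_num
  conv_rhs => rw [← hmap]
  rw [Measure.map_apply (by fun_prop) measurableSet_Ici]
  congr 1
  ext x
  simp only [Set.mem_Iic, Set.mem_preimage, Set.mem_Ici]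
  constructor <;> intro <;> linarith

private lemma gauss_tail_bound (v : ℝ≥0) (hv : v ≠ 0) (t : ℝ) (ht : 0 ≤ t) :
    gaussianReal 0 v (Set.Ici t) ≤ ENNReal.ofReal ((1/2) * Real.exp (-t^2/(2*(v:ℝ)))) := by
  have hv' : 0 < (v:ℝ) := by positivity
  have hpt : ∀ x ∈ Set.Ici t, gaussianPDF 0 v x
      ≤ ENNReal.ofReal (Real.exp (-t^2/(2*(v:ℝ)))) * gaussianPDF t v x := by
    intro x hx
    simp only [Set.mem_Ici] at hx
    rw [gaussianPDF, gaussianPDF, ← ENNReal.ofReal_mul (Real.exp_nonneg _)]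
    refine ENNReal.ofReal_le_ofReal ?_
    unfold gaussianPDFReal
    have h : (-(x - 0)^2 / (2*(v:ℝ))) ≤ (-(x - t)^2 / (2*(v:ℝ))) + (-t^2/(2*(v:ℝ))) := by
      rw [← add_div, div_le_div_iff_of_pos_right (by positivity)]
      nlinarith [sq_nonneg (x - t), mul_le_mul_of_nonneg_left hx ht]
    calc (√(2 * π * (v:ℝ)))⁻¹ * rexp (-(x - 0) ^ 2 / (2 * (v:ℝ)))
        ≤ (√(2 * π * (v:ℝ)))⁻¹ *
            (rexp (-(x - t) ^ 2 / (2 * (v:ℝ))) * rexp (-t ^ 2 / (2 * (v:ℝ)))) := by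
          rw [← Real.exp_add]
          exact mul_le_mul_of_nonneg_left (Real.exp_le_exp.mpr h) (by positivity)
      _ = rexp (-t ^ 2 / (2 * (v:ℝ))) *
            ((√(2 * π * (v:ℝ)))⁻¹ * rexp (-(x - t) ^ 2 / (2 * (v:ℝ)))) := by ring
  calc gaussianReal 0 v (Set.Ici t) = ∫⁻ x in Set.Ici t, gaussianPDF 0 v x :=
        gaussianReal_apply 0 hv _
    _ ≤ ∫⁻ x in Set.Ici t, ENNReal.ofReal (Real.exp (-t^2/(2*(v:ℝ)))) * gaussianPDF t v x :=
        setLIntegral_mono ((measurable_gaussianPDF t v).const_mul _) hpt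
    _ = ENNReal.ofReal (Real.exp (-t^2/(2*(v:ℝ)))) * ∫⁻ x in Set.Ici t, gaussianPDF t v x :=
        lintegral_const_mul _ (measurable_gaussianPDF t v)
    _ = ENNReal.ofReal (Real.exp (-t^2/(2*(v:ℝ)))) * gaussianReal t v (Set.Ici t) := by
        rw [gaussianReal_apply t hv]
    _ = ENNReal.ofReal ((1/2) * Real.exp (-t^2/(2*(v:ℝ)))) := by
        rw [gauss_half_shift v hv t, ENNReal.ofReal_mul (by norm_num), mul_comm]
        congr 1
        rw [ENNReal.ofReal_div_of_pos (by norm_num)]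
        norm_num


/-- Pairwise-error tail bound (proof of Theorem 1, eqs. (27)–(39)):
if `g ∈ ℝⁿ` has all components nonzero, `z` has i.i.d. `N(0, s²)` components,
`g_min = min_l |g_l|` and `1 ≤ D ≤ n`, then
`P(‖sign(g+z) − sign(g)‖₀ ≥ D) ≤ (Σ_{j=D}^n C(n,j)) · 2^{−D} · exp(−D g_min²/(2s²))`. -/
theorem sign_flip_count_tail_bound (n : ℕ) (g : Fin n → ℝ) (hnz : ∀ l, g l ≠ 0)
    (s : ℝ) (hs : 0 < s)
    (gmin : ℝ) (hgmin : IsLeast {r : ℝ | ∃ l, r = |g l|} gmin)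
    (D : ℕ) (hD1 : 1 ≤ D) (hDn : D ≤ n) :
    (Measure.pi fun _ : Fin n => gaussianReal 0 (s ^ 2).toNNReal)
        {z : Fin n → ℝ |
          D ≤ hammingDist (fun l => sgn (g l + z l)) (fun l => sgn (g l))} ≤
      ENNReal.ofReal ((∑ j ∈ Finset.Icc D n, (n.choose j : ℝ)) / 2 ^ D *
        Real.exp (-(D : ℝ) * gmin ^ 2 / (2 * s ^ 2))) := by
  set v : ℝ≥0 := (s ^ 2).toNNReal with hv_def
  have hv : v ≠ 0 := by
    simp only [hv_def, ne_eq, Real.toNNReal_eq_zero, not_le]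
    positivity
  have hv2 : (v : ℝ) = s ^ 2 := Real.coe_toNNReal _ (sq_nonneg s)
  obtain ⟨⟨l₀, hl₀⟩, hlb⟩ := hgmin
  have hgmin_pos : 0 < gmin := by
    rw [hl₀]; exact abs_pos.mpr (hnz l₀)
  have hlb' : ∀ l, gmin ≤ |g l| := fun l => hlb ⟨l, rfl⟩
  set p : ℝ := (1/2) * Real.exp (-gmin^2/(2*s^2)) with hp_def
  have hp_nonneg : 0 ≤ p := by positivity
  set C : Fin n → Set ℝ := fun l => if 0 ≤ g l then Set.Iic (-g l) else Set.Ici (-g l)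
    with hC_def
  -- flips land in C
  have hflip : ∀ l x, sgn (g l + x) ≠ sgn (g l) → x ∈ C l := by
    intro l x h
    unfold sgn at h
    by_cases hg : 0 ≤ g l
    · rw [if_pos hg] at h
      have hx : ¬ (0 ≤ g l + x) := by
        intro h'; rw [if_pos h'] at h; exact h rfl
      simp only [hC_def, if_pos hg, Set.mem_Iic]
      push_neg at hx
      linarith
    · rw [if_neg hg] at h
      have hx : 0 ≤ g l + x := by
        by_contra h'; rw [if_neg h'] at h; exact h rfl
      simp only [hC_def, if_neg hg, Set.mem_Ici]
      linarith
  -- measure bound on C l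
  have hC : ∀ l, gaussianReal 0 v (C l) ≤ ENNReal.ofReal p := by
    intro l
    have hab : gmin ≤ |g l| := hlb' l
    have key : gaussianReal 0 v (Set.Ici |g l|) ≤ ENNReal.ofReal p := by
      refine (gauss_tail_bound v hv _ (abs_nonneg _)).trans (ENNReal.ofReal_le_ofReal ?_)
      rw [hv2, hp_def]
      gcongr
    by_cases hg : 0 ≤ g l
    · simp only [hC_def, if_pos hg]
      rw [gauss_neg_sym v hv (g l)]
      rwa [abs_of_nonneg hg] at key
    · simp only [hC_def, if_neg hg]
      push_neg at hg
      rwa [abs_of_neg hg] at key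
  -- event inclusion into union over D-subsets
  set ES : Finset (Fin n) → Set (Fin n → ℝ) :=
    fun S => Set.pi Set.univ (fun l => if l ∈ S then C l else Set.univ) with hES_def
  have hsub : {z : Fin n → ℝ |
        D ≤ hammingDist (fun l => sgn (g l + z l)) (fun l => sgn (g l))} ⊆
      ⋃ S ∈ Finset.univ.powersetCard D, ES S := by
    intro z hz
    simp only [Set.mem_setOf_eq, hammingDist] at hz
    obtain ⟨S, hS_sub, hS_card⟩ := Finset.exists_subset_card_eq hz
    refine Set.mem_iUnion₂.mpr ⟨S, Finset.mem_powersetCard_univ.mpr hS_card, ?_⟩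
    intro l _
    simp only
    split_ifs with hl
    · have := hS_sub hl
      simp only [Finset.mem_filter] at this
      exact hflip l (z l) this.2
    · trivial
  -- measure of each ES S
  have hES : ∀ S ∈ Finset.univ.powersetCard D,
      (Measure.pi fun _ : Fin n => gaussianReal 0 v) (ES S) ≤ (ENNReal.ofReal p) ^ D := by
    intro S hS
    have hcard : S.card = D := Finset.mem_powersetCard_univ.mp hS
    rw [hES_def]
    rw [Measure.pi_pi]
    calc ∏ l, (gaussianReal 0 v) (if l ∈ S then C l else Set.univ)
        = ∏ l ∈ S, gaussianReal 0 v (C l) := by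
          simp only [apply_ite (gaussianReal 0 v), measure_univ]
          rw [Finset.prod_ite_mem, Finset.univ_inter]
      _ ≤ ∏ _l ∈ S, ENNReal.ofReal p := Finset.prod_le_prod' (fun l _ => hC l)
      _ = (ENNReal.ofReal p) ^ D := by rw [Finset.prod_const, hcard]
  -- union bound
  have hcount : (Finset.univ.powersetCard D (α := Fin n)).card = n.choose D := by
    rw [Finset.card_powersetCard, Finset.card_univ, Fintype.card_fin]
  calc (Measure.pi fun _ : Fin n => gaussianReal 0 v)
        {z : Fin n → ℝ |
          D ≤ hammingDist (fun l => sgn (g l + z l)) (fun l => sgn (g l))}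
      ≤ (Measure.pi fun _ : Fin n => gaussianReal 0 v)
          (⋃ S ∈ Finset.univ.powersetCard D, ES S) := measure_mono hsub
    _ ≤ ∑ S ∈ Finset.univ.powersetCard D,
          (Measure.pi fun _ : Fin n => gaussianReal 0 v) (ES S) :=
        measure_biUnion_finset_le _ _
    _ ≤ ∑ _S ∈ Finset.univ.powersetCard D, (ENNReal.ofReal p) ^ D :=
        Finset.sum_le_sum hES
    _ = (n.choose D : ℝ≥0∞) * (ENNReal.ofReal p) ^ D := by
        rw [Finset.sum_const, hcount, nsmul_eq_mul]
    _ = ENNReal.ofReal ((n.choose D : ℝ) * p ^ D) := by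
        rw [← ENNReal.ofReal_pow hp_nonneg, ← ENNReal.ofReal_natCast (n.choose D),
          ← ENNReal.ofReal_mul (by positivity)]
    _ ≤ ENNReal.ofReal ((∑ j ∈ Finset.Icc D n, (n.choose j : ℝ)) / 2 ^ D *
          Real.exp (-(D : ℝ) * gmin ^ 2 / (2 * s ^ 2))) := by
        refine ENNReal.ofReal_le_ofReal ?_
        have he : Real.exp (-gmin^2/(2*s^2)) ^ D
            = Real.exp (-(D:ℝ) * gmin ^ 2 / (2 * s ^ 2)) := by
          rw [← Real.exp_nat_mul]
          congr 1
          ring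
        have hsum : (n.choose D : ℝ) ≤ ∑ j ∈ Finset.Icc D n, (n.choose j : ℝ) :=
          Finset.single_le_sum (f := fun j => (n.choose j : ℝ)) (fun j _ => Nat.cast_nonneg _)
            (Finset.mem_Icc.mpr ⟨le_rfl, hDn⟩)
        have hrw : (n.choose D : ℝ) * p ^ D
            = (n.choose D : ℝ) / 2 ^ D * Real.exp (-(D:ℝ) * gmin ^ 2 / (2 * s ^ 2)) := by
          rw [hp_def, mul_pow, he, one_div, inv_pow]
          ring
        rw [hrw]
        gcongr
end
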